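/- arXiv:1604.06499 — 6 statements merged into one kernel-verified Lean document; each statement's English description precedes it below -/
import Mathlib

section
/- Let Π be a plane through the origin in ℝ³ and let L be a full-rank lattice in ℝ³ invariant under the reflection in Π. Set L₀ := L ∩ Π. Then L₀ is a rank-2 lattice spanning Π, and if w is any point of L ∖ L₀ whose distance to Π is minimal among all points of L ∖ L₀, then L = ⋃_{k∈ℤ} (L₀ + kw); that is, every element of L can be written as v + kw with v ∈ L₀ and k ∈ ℤ. -/
/-!
The reflection `σ` in `Π` satisfies `x + σ x = 2 • proj_Π x`, so twice the projection of every
lattice vector lies in `L₀ = L ∩ Π`. As the projections of `L` span `Π`, the discrete group `L₀`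
is a full lattice in `Π` and hence has a `ℤ`-basis of two vectors. The distance of a point to `Π`
is the length of its component along the line `Πᗮ`; subtracting from `x ∈ L` the nearest integer
multiple of `w` leaves a component at most half as long as that of `w`, so by minimality of `w`
the difference lies in `L₀`.
-/

noncomputable section

/-- Euclidean 3-space. -/
abbrev E3 := EuclideanSpace ℝ (Fin 3)

/-- A full-rank lattice in `ℝ³`. -/
def IsFullLattice (L : AddSubgroup E3) : Prop :=
  ∃ b : Module.Basis (Fin 3) ℝ E3,
    ∀ x, x ∈ L ↔ ∃ c : Fin 3 → ℤ, x = ∑ i, (c i : ℝ) • b i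

open Module Submodule

namespace Submodule

variable {E : Type*} [NormedAddCommGroup E] [InnerProductSpace ℝ E]
  {K : Submodule ℝ E} [K.HasOrthogonalProjection]

theorem eq_reflection_of_eqOn (R : E →ₗ[ℝ] E) (hR₁ : ∀ x ∈ K, R x = x)
    (hR₂ : ∀ x ∈ Kᗮ, R x = -x) (x : E) : R x = K.reflection x := by
  have hsplit : x = K.starProjection x + (x - K.starProjection x) := by abel
  rw [hsplit, map_add, hR₁ _ (K.starProjection_apply_mem x),
    hR₂ _ (K.sub_starProjection_mem_orthogonal x), ← hsplit, reflection_apply, two_smul]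
  abel

theorem add_reflection_eq_two_smul_starProjection (x : E) :
    x + K.reflection x = (2 : ℝ) • K.starProjection x := by
  rw [reflection_apply, ofNat_smul_eq_nsmul (R := ℝ)]
  abel

theorem infDist_eq_norm_starProjection_orthogonal (x : E) :
    Metric.infDist x (K : Set E) = ‖Kᗮ.starProjection x‖ := by
  simp_rw [Metric.infDist_eq_iInf, starProjection_orthogonal_val, starProjection_minimal,
    dist_eq_norm]
  rfl

theorem exists_sub_zsmul_mem_of_infDist_le (hK : finrank ℝ Kᗮ = 1) {L : AddSubgroup E}
    {w : E} (hwL : w ∈ L) (hwK : w ∉ K)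
    (hmin : ∀ y ∈ L, y ∉ K → Metric.infDist w K ≤ Metric.infDist y K) {x : E} (hxL : x ∈ L) :
    ∃ k : ℤ, x - k • w ∈ K := by
  set q := Kᗮ.starProjection
  have hqw : q w ≠ 0 := by
    rwa [Ne, starProjection_apply_eq_zero_iff, orthogonal_orthogonal]
  obtain ⟨t, ht⟩ := (finrank_eq_one_iff_of_nonzero' (⟨q w, Kᗮ.starProjection_apply_mem w⟩ : Kᗮ)
    (by simpa using hqw)).mp hK ⟨q x, Kᗮ.starProjection_apply_mem x⟩
  have hqx : q x = t • q w := by simpa using congrArg Subtype.val ht.symm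
  refine ⟨round t, by_contra fun hk => ?_⟩
  have hle := hmin _ (L.sub_mem hxL (L.zsmul_mem hwL _)) hk
  rw [infDist_eq_norm_starProjection_orthogonal, infDist_eq_norm_starProjection_orthogonal,
    map_sub, map_zsmul, hqx, ← Int.cast_smul_eq_zsmul ℝ, ← sub_smul, norm_smul,
    Real.norm_eq_abs] at hle
  have hpos : 0 < ‖q w‖ := norm_pos_iff.mpr hqw
  nlinarith [abs_sub_round t, abs_nonneg (t - round t)]

end Submodule

section Lattice

variable {E : Type*} [NormedAddCommGroup E] [InnerProductSpace ℝ E]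
  (L : Submodule ℤ E) (K : Submodule ℝ E)

abbrev latticeInter : Submodule ℤ K := L.comap (K.subtype.restrictScalars ℤ)

instance [DiscreteTopology L] : DiscreteTopology (latticeInter L K) :=
  DiscreteTopology.preimage_of_continuous_injective (L : Set E) continuous_subtype_val
    Subtype.val_injective

theorem mem_map_latticeInter {x : E} :
    x ∈ (latticeInter L K).map (K.subtype.restrictScalars ℤ) ↔ x ∈ L ∧ x ∈ K := by
  constructor
  · rintro ⟨y, hy, rfl⟩
    exact ⟨hy, y.2⟩
  · rintro ⟨hxL, hxK⟩
    exact ⟨⟨x, hxK⟩, hxL, rfl⟩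

theorem isZLattice_latticeInter_of_reflection_mem [K.HasOrthogonalProjection]
    [DiscreteTopology L] [IsZLattice ℝ L] (hL : ∀ x ∈ L, K.reflection x ∈ L) :
    IsZLattice ℝ (latticeInter L K) := by
  refine ⟨eq_top_iff.mpr ?_⟩
  have hproj : ∀ x ∈ L, K.orthogonalProjectionOnto x ∈ span ℝ (latticeInter L K : Set K) := by
    intro x hx
    have hdouble : (2 : ℝ) • K.orthogonalProjectionOnto x ∈ latticeInter L K := by
      change (2 : ℝ) • K.starProjection x ∈ L
      rw [← K.add_reflection_eq_two_smul_starProjection]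
      exact L.add_mem hx (hL x hx)
    simpa using (span ℝ _).smul_mem (2 : ℝ)⁻¹ (subset_span hdouble)
  calc ⊤ = (span ℝ (L : Set E)).map (K.orthogonalProjectionOnto : E →ₗ[ℝ] K) := by
        rw [IsZLattice.span_top, Submodule.map_top, eq_comm, LinearMap.range_eq_top]
        exact fun v => ⟨v, K.orthogonalProjectionOnto_mem_subspace_eq_self v⟩
    _ ≤ span ℝ (latticeInter L K : Set K) := by
        rw [map_span, span_le]
        rintro _ ⟨x, hx, rfl⟩
        exact hproj x hx

end Lattice

theorem exists_linearIndependent_span_eq_of_isZLattice {E : Type*} [NormedAddCommGroup E]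
    [InnerProductSpace ℝ E] [FiniteDimensional ℝ E] {K : Submodule ℝ E} (M : Submodule ℤ K)
    [DiscreteTopology M] [IsZLattice ℝ M] {n : ℕ} (hn : finrank ℝ K = n) :
    ∃ w : Fin n → E, LinearIndependent ℝ w ∧ span ℝ (Set.range w) = K ∧
      span ℤ (Set.range w) = M.map (K.subtype.restrictScalars ℤ) := by
  have := ZLattice.module_finite ℝ M
  have := ZLattice.module_free ℝ M
  let e := finBasisOfFinrankEq ℤ M ((ZLattice.rank ℝ M).trans hn)
  let b := e.ofZLatticeBasis ℝ M
  have hrange : Set.range (K.subtype ∘ b) = K.subtype '' Set.range b := Set.range_comp _ _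
  refine ⟨K.subtype ∘ b, b.linearIndependent.map' _ K.ker_subtype, ?_, ?_⟩
  · rw [hrange, ← map_span, b.span_eq, Submodule.map_top, range_subtype]
  · rw [hrange, ← e.ofZLatticeBasis_span ℝ, map_span]
    rfl

theorem IsFullLattice.exists_eq_span {L : AddSubgroup E3} (hL : IsFullLattice L) :
    ∃ b : Basis (Fin 3) ℝ E3, L = (span ℤ (Set.range b)).toAddSubgroup := by
  obtain ⟨b, hb⟩ := hL
  refine ⟨b, AddSubgroup.ext fun x => ?_⟩
  simp_rw [hb, mem_toAddSubgroup, mem_span_range_iff_exists_fun, Int.cast_smul_eq_zsmul, eq_comm]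

/-- Let `Π` be a plane through the origin and `L` a full-rank lattice
invariant under the reflection in `Π`, and set `L₀ := L ∩ Π`.  Then `L₀` is a rank-2
lattice spanning `Π`, and if `w ∈ L ∖ L₀` has minimal distance to `Π` among points of
`L ∖ L₀`, then every element of `L` has the form `v + k • w` with `v ∈ L₀`, `k ∈ ℤ`. -/
theorem statement3 (P : Submodule ℝ E3) (hP : Module.finrank ℝ P = 2)
    (R : E3 ≃ₗᵢ[ℝ] E3)
    (hR₁ : ∀ x ∈ P, R x = x) (hR₂ : ∀ x ∈ Pᗮ, R x = -x)
    (L : AddSubgroup E3) (hL : IsFullLattice L)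
    (hinv : R '' (L : Set E3) = (L : Set E3)) :
    (∃ w₁ w₂ : E3, w₁ ∈ P ∧ w₂ ∈ P ∧ LinearIndependent ℝ ![w₁, w₂] ∧
        Submodule.span ℝ {w₁, w₂} = P ∧
        (∀ x : E3, (x ∈ L ∧ x ∈ P) ↔ ∃ m n : ℤ, x = m • w₁ + n • w₂)) ∧
    (∀ w : E3, w ∈ L → w ∉ P →
      (∀ y : E3, y ∈ L → y ∉ P →
        Metric.infDist w (P : Set E3) ≤ Metric.infDist y (P : Set E3)) →
      ∀ x ∈ L, ∃ (v : E3) (k : ℤ), (v ∈ L ∧ v ∈ P) ∧ x = v + k • w) := by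
  refine ⟨?_, fun w hwL hwP hmin x hxL => ?_⟩
  · obtain ⟨b, rfl⟩ := hL.exists_eq_span
    have hrefl : ∀ x ∈ span ℤ (Set.range b), P.reflection x ∈ span ℤ (Set.range b) := by
      intro x hx
      rw [← P.eq_reflection_of_eqOn R.toLinearMap hR₁ hR₂]
      exact hinv.subset ⟨x, hx, rfl⟩
    have := isZLattice_latticeInter_of_reflection_mem _ P hrefl
    obtain ⟨w, hind, hspanℝ, hspanℤ⟩ := exists_linearIndependent_span_eq_of_isZLattice
      (latticeInter (span ℤ (Set.range b)) P) hP
    have hw : ![w 0, w 1] = w := by ext i; fin_cases i <;> rfl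
    have hpair : ({w 0, w 1} : Set E3) = Set.range w := by
      rw [← hw, Matrix.range_cons_cons_empty]; rfl
    refine ⟨w 0, w 1, hspanℝ ▸ subset_span ⟨0, rfl⟩, hspanℝ ▸ subset_span ⟨1, rfl⟩,
      hw ▸ hind, hpair ▸ hspanℝ, fun x => ?_⟩
    refine (mem_map_latticeInter _ P).symm.trans ?_
    rw [← hspanℤ, ← hpair, mem_span_pair]
    exact exists₂_congr fun _ _ => eq_comm
  · obtain ⟨k, hk⟩ := exists_sub_zsmul_mem_of_infDist_le
      (finrank_add_finrank_orthogonal' (by rw [hP, finrank_euclideanSpace_fin])) hwL hwP hmin hxL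
    exact ⟨x - k • w, k, ⟨L.sub_mem hxL (L.zsmul_mem hwL k), hk⟩, (sub_add_cancel _ _).symm⟩

end
end

section
/- Let Π be a plane through the origin in ℝ³, let L be a full-rank lattice in ℝ³ invariant under the reflection in Π, and set L₀ := L ∩ Π. Then for any basis {v₁, v₂} of the rank-2 lattice L₀, there exists w ∈ L ∖ L₀ of minimal distance to Π among points of L ∖ L₀ whose orthogonal projection onto Π lies in the set {0, v₁/2, v₂/2, (v₁+v₂)/2} and which satisfies L = ⋃_{k∈ℤ}(L₀ + kw). Moreover, L is a vertical translation lattice with respect to Π if and only if such a w can be chosen with orthogonal projection 0. -/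
/-!
Write `P = e^⊥` for a unit normal `e`; the reflection is then `x ↦ x - 2⟪e, x⟫ e`. For `x ∈ L`
the lattice vector `x - R x = 2⟪e, x⟫ e` shows that the heights `⟪e, x⟫` of lattice points stay
away from `0`, so they form a cyclic subgroup of `ℝ`. If the height of `w ∈ L` generates it, each
`x ∈ L` of height `k⟪e, w⟫` splits as `(x - k w) + k w` with `x - k w ∈ L₀`; since
`dist(v + k w, P) = |k| dist(w, P)` for `v ∈ P`, such a `w` also has minimal distance to `P`.
Finally `w + R w` is twice the projection of `w` and lies in `L₀ = ℤv₁ + ℤv₂`; subtracting from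
`w` the integer parts of half its coordinates moves the projection into
`{0, v₁/2, v₂/2, (v₁+v₂)/2}` without changing the height.
-/
noncomputable section

/-- `L` is a vertical translation lattice with respect to the plane `P`:
`L = L₀ + ℤ w'` for some vector `w'` orthogonal to `P`, where `L₀ = L ∩ P`. -/
def IsVerticalLattice (P : Submodule ℝ E3) (L : AddSubgroup E3) : Prop :=
  ∃ w' : E3, w' ∈ Pᗮ ∧
    ∀ x : E3, x ∈ L ↔ ∃ (v : E3) (k : ℤ), (v ∈ L ∧ v ∈ P) ∧ x = v + k • w'

open Module Metric RealInnerProductSpace Submodule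

section Hyperplane

variable {E : Type*} [NormedAddCommGroup E] [InnerProductSpace ℝ E]

theorem Submodule.infDist_eq_norm_sub_starProjection (K : Submodule ℝ E)
    [K.HasOrthogonalProjection] (x : E) :
    infDist x (K : Set E) = ‖x - K.starProjection x‖ := by
  rw [infDist_eq_iInf, starProjection_minimal]
  simp only [dist_eq_norm]
  rfl

theorem Submodule.infDist_add_smul (K : Submodule ℝ E) [K.HasOrthogonalProjection]
    {v : E} (hv : v ∈ K) (c : ℝ) (w : E) :
    infDist (v + c • w) (K : Set E) = |c| * infDist w (K : Set E) := by
  rw [K.infDist_eq_norm_sub_starProjection, K.infDist_eq_norm_sub_starProjection, map_add,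
    map_smul, starProjection_eq_self_iff.2 hv, ← Real.norm_eq_abs, ← norm_smul]
  congr 1
  module

theorem Submodule.notMem_of_forall_mem_eq_add_zsmul {K : Submodule ℝ E} {L : AddSubgroup E}
    {w : E} (hcov : ∀ x ∈ L, ∃ (v : E) (k : ℤ), (v ∈ L ∧ v ∈ K) ∧ x = v + k • w)
    {y : E} (hy : y ∈ L) (hyK : y ∉ K) : w ∉ K := by
  obtain ⟨v, k, ⟨-, hv⟩, rfl⟩ := hcov y hy
  exact fun hw => hyK (K.add_mem hv (K.toAddSubgroup.zsmul_mem hw k))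

theorem Submodule.infDist_le_of_forall_mem_eq_add_zsmul {K : Submodule ℝ E}
    [K.HasOrthogonalProjection] {L : AddSubgroup E} {w : E}
    (hcov : ∀ x ∈ L, ∃ (v : E) (k : ℤ), (v ∈ L ∧ v ∈ K) ∧ x = v + k • w)
    {y : E} (hy : y ∈ L) (hyK : y ∉ K) : infDist w (K : Set E) ≤ infDist y (K : Set E) := by
  obtain ⟨v, k, ⟨-, hv⟩, rfl⟩ := hcov y hy
  have hk : k ≠ 0 := by
    rintro rfl
    exact hyK (by simpa using hv)
  rw [← Int.cast_smul_eq_zsmul ℝ, K.infDist_add_smul hv]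
  exact le_mul_of_one_le_left infDist_nonneg (mod_cast Int.one_le_abs hk)

variable {e : E}

theorem sub_starProjection_orthogonal_span_singleton (he : ‖e‖ = 1) (x : E) :
    x - (ℝ ∙ e)ᗮ.starProjection x = ⟪e, x⟫ • e := by
  rw [starProjection_orthogonal_val, starProjection_unit_singleton ℝ he, sub_sub_cancel]

theorem apply_eq_sub_two_inner_smul {F : Type*} [FunLike F E E] [LinearMapClass F ℝ E E]
    (R : F) (he : ‖e‖ = 1) (hR : ∀ x ∈ (ℝ ∙ e)ᗮ, R x = x) (hRe : R e = -e) (x : E) :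
    R x = x - (2 * ⟪e, x⟫) • e := by
  have hx : x - ⟪e, x⟫ • e ∈ (ℝ ∙ e)ᗮ := by
    rw [← sub_starProjection_orthogonal_span_singleton he, sub_sub_cancel]
    exact starProjection_apply_mem _ x
  calc R x = R (x - ⟪e, x⟫ • e) + ⟪e, x⟫ • R e := by rw [← map_smul, ← map_add, sub_add_cancel]
    _ = x - (2 * ⟪e, x⟫) • e := by rw [hR _ hx, hRe]; module

theorem exists_norm_eq_one_eq_orthogonal_span_singleton [FiniteDimensional ℝ E]
    (P : Submodule ℝ E) (hP : finrank ℝ P + 1 = finrank ℝ E) :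
    ∃ e : E, ‖e‖ = 1 ∧ P = (ℝ ∙ e)ᗮ := by
  have h1 : finrank ℝ Pᗮ = 1 := by
    have := P.finrank_add_finrank_orthogonal
    omega
  obtain ⟨v, hv0, hv⟩ := finrank_eq_one_iff'.1 h1
  have hv0' : (v : E) ≠ 0 := by simpa using hv0
  refine ⟨‖(v : E)‖⁻¹ • (v : E), norm_smul_inv_norm hv0', ?_⟩
  have hspan : Pᗮ = ℝ ∙ (v : E) := by
    refine le_antisymm (fun w hw => ?_) ((span_singleton_le_iff_mem _ _).2 v.2)
    obtain ⟨c, hc⟩ := hv ⟨w, hw⟩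
    exact mem_span_singleton.2 ⟨c, congrArg Subtype.val hc⟩
  rw [span_singleton_smul_eq (inv_ne_zero (norm_ne_zero_iff.2 hv0')).isUnit, ← hspan,
    P.orthogonal_orthogonal]

end Hyperplane

theorem AddSubgroup.exists_mem_forall_eq_zsmul_of_isolated_zero {M : Type*} [AddCommGroup M]
    (f : M →+ ℝ) (L : AddSubgroup M) {δ : ℝ} (hδ : 0 < δ)
    (hf : ∀ x ∈ L, f x ≠ 0 → δ ≤ |f x|) : ∃ w ∈ L, ∀ x ∈ L, ∃ k : ℤ, f x = k • f w := by
  obtain ⟨a, ha⟩ := AddSubgroup.cyclic_of_isolated_zero (H := L.map f) hδ <| by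
    refine Set.disjoint_left.2 ?_
    rintro _ ⟨x, hx, rfl⟩ ⟨hpos, hlt⟩
    have := hf x hx hpos.ne'
    rw [abs_of_pos hpos] at this
    linarith
  have hmem : ∀ y, y ∈ L.map f ↔ ∃ k : ℤ, k • a = y := by
    simp [ha, AddSubgroup.mem_closure_singleton]
  obtain ⟨w, hw, hwa⟩ := AddSubgroup.mem_map.1 ((hmem a).2 ⟨1, one_zsmul a⟩)
  refine ⟨w, hw, fun x hx => ?_⟩
  obtain ⟨k, hk⟩ := (hmem (f x)).1 (AddSubgroup.mem_map_of_mem f hx)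
  exact ⟨k, by rw [← hk, hwa]⟩

theorem sub_ediv_two_smul_mem_halves {V : Type*} [AddCommGroup V] [Module ℝ V]
    {p v₁ v₂ : V} {m n : ℤ} (h : (2 : ℝ) • p = m • v₁ + n • v₂) :
    p - ((m / 2) • v₁ + (n / 2) • v₂) ∈
      ({0, (1/2 : ℝ) • v₁, (1/2 : ℝ) • v₂, (1/2 : ℝ) • (v₁ + v₂)} : Set V) := by
  have hp : p = (1/2 : ℝ) • ((m : ℝ) • v₁ + (n : ℝ) • v₂) := by
    rw [Int.cast_smul_eq_zsmul, Int.cast_smul_eq_zsmul, ← h]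
    module
  have hm : (m : ℝ) = 2 * (m / 2 : ℤ) + (m % 2 : ℤ) := mod_cast (Int.mul_ediv_add_emod m 2).symm
  have hn : (n : ℝ) = 2 * (n / 2 : ℤ) + (n % 2 : ℤ) := mod_cast (Int.mul_ediv_add_emod n 2).symm
  rw [hp, hm, hn, ← Int.cast_smul_eq_zsmul ℝ (m / 2), ← Int.cast_smul_eq_zsmul ℝ (n / 2)]
  rcases Int.emod_two_eq_zero_or_one m with hm2 | hm2 <;>
    rcases Int.emod_two_eq_zero_or_one n with hn2 | hn2 <;>
    simp only [hm2, hn2, Int.cast_zero, Int.cast_one, Set.mem_insert_iff,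
      Set.mem_singleton_iff] <;>
    [left; (right; right; left); (right; left); (right; right; right)] <;>
    module

section Lattice

variable {E : Type*} [NormedAddCommGroup E] [InnerProductSpace ℝ E] {e : E} {L : AddSubgroup E}

theorem half_le_abs_inner_of_apply_mem {F : Type*} [FunLike F E E] (R : F) (he : ‖e‖ = 1)
    (hR : ∀ x, R x = x - (2 * ⟪e, x⟫) • e) (hRL : ∀ x ∈ L, R x ∈ L) {ε : ℝ}
    (hε : ∀ x ∈ L, x ≠ 0 → ε ≤ ‖x‖) {x : E} (hx : x ∈ L) (hx0 : ⟪e, x⟫ ≠ 0) :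
    ε / 2 ≤ |⟪e, x⟫| := by
  have hsub : x - R x = (2 * ⟪e, x⟫) • e := by rw [hR, sub_sub_cancel]
  have hne : x - R x ≠ 0 := by
    rw [hsub]
    exact smul_ne_zero (mul_ne_zero two_ne_zero hx0) (norm_ne_zero_iff.1 (he ▸ one_ne_zero))
  have := hε _ (L.sub_mem hx (hRL x hx)) hne
  rw [hsub, norm_smul, he, mul_one, Real.norm_eq_abs, abs_mul, abs_two] at this
  linarith

theorem exists_eq_add_zsmul_of_forall_inner_eq_zsmul {w : E} (hw : w ∈ L)
    (hgen : ∀ x ∈ L, ∃ k : ℤ, ⟪e, x⟫ = k • ⟪e, w⟫) :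
    ∀ x ∈ L, ∃ (v : E) (k : ℤ), (v ∈ L ∧ v ∈ (ℝ ∙ e)ᗮ) ∧ x = v + k • w := by
  intro x hx
  obtain ⟨k, hk⟩ := hgen x hx
  refine ⟨x - k • w, k, ⟨L.sub_mem hx (L.zsmul_mem hw k), ?_⟩, (sub_add_cancel x _).symm⟩
  rw [mem_orthogonal_singleton_iff_inner_right, inner_sub_right, ← Int.cast_smul_eq_zsmul ℝ,
    real_inner_smul_right, hk, zsmul_eq_mul, sub_self]

theorem exists_inner_eq_and_starProjection_mem_halves {F : Type*} [FunLike F E E] (R : F)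
    (he : ‖e‖ = 1) (hR : ∀ x, R x = x - (2 * ⟪e, x⟫) • e) {w₀ : E} (hw₀ : w₀ ∈ L)
    (hRw₀ : R w₀ ∈ L) {v₁ v₂ : E} (hv₁ : v₁ ∈ L ∧ v₁ ∈ (ℝ ∙ e)ᗮ) (hv₂ : v₂ ∈ L ∧ v₂ ∈ (ℝ ∙ e)ᗮ)
    (hbasis : ∀ x, x ∈ L ∧ x ∈ (ℝ ∙ e)ᗮ → ∃ m n : ℤ, x = m • v₁ + n • v₂) :
    ∃ w ∈ L, ⟪e, w⟫ = ⟪e, w₀⟫ ∧ (ℝ ∙ e)ᗮ.starProjection w ∈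
      ({0, (1/2 : ℝ) • v₁, (1/2 : ℝ) • v₂, (1/2 : ℝ) • (v₁ + v₂)} : Set E) := by
  have hsum : w₀ + R w₀ = (2 : ℝ) • (ℝ ∙ e)ᗮ.starProjection w₀ := by
    rw [hR]
    linear_combination (norm := module) (2 : ℝ) • sub_starProjection_orthogonal_span_singleton he w₀
  obtain ⟨m, n, hmn⟩ := hbasis _
    ⟨L.add_mem hw₀ hRw₀, hsum ▸ smul_mem _ _ (starProjection_apply_mem _ _)⟩
  have hu : (m / 2) • v₁ + (n / 2) • v₂ ∈ (ℝ ∙ e)ᗮ :=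
    add_mem (zsmul_mem hv₁.2 _) (zsmul_mem hv₂.2 _)
  refine ⟨w₀ - ((m / 2) • v₁ + (n / 2) • v₂),
    L.sub_mem hw₀ (L.add_mem (L.zsmul_mem hv₁.1 _) (L.zsmul_mem hv₂.1 _)), ?_, ?_⟩
  · rw [inner_sub_right, mem_orthogonal_singleton_iff_inner_right.1 hu, sub_zero]
  · rw [map_sub, starProjection_eq_self_iff.2 hu]
    exact sub_ediv_two_smul_mem_halves (hsum ▸ hmn)

end Lattice

theorem IsFullLattice.exists_basis_coe_eq_span {L : AddSubgroup E3} (hL : IsFullLattice L) :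
    ∃ b : Basis (Fin 3) ℝ E3, (L : Set E3) = span ℤ (Set.range b) := by
  obtain ⟨b, hb⟩ := hL
  refine ⟨b, Set.ext fun x => ?_⟩
  simp only [SetLike.mem_coe, hb, mem_span_range_iff_exists_fun, Int.cast_smul_eq_zsmul, eq_comm]

theorem IsFullLattice.exists_forall_le_norm {L : AddSubgroup E3} (hL : IsFullLattice L) :
    ∃ ε > 0, ∀ x ∈ L, x ≠ 0 → ε ≤ ‖x‖ := by
  obtain ⟨b, hb⟩ := hL.exists_basis_coe_eq_span
  have hdisc : IsDiscrete (L : Set E3) := by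
    rw [hb, isDiscrete_iff_discreteTopology]
    exact inferInstanceAs (DiscreteTopology (span ℤ (Set.range b)))
  obtain ⟨ε, hε, hball⟩ := exists_ball_inter_eq_singleton_of_mem_discrete hdisc L.zero_mem
  refine ⟨ε, hε, fun x hx hx0 => not_lt.1 fun hlt => hx0 ?_⟩
  have : x ∈ ball 0 ε ∩ L := ⟨mem_ball_zero_iff.2 hlt, hx⟩
  rwa [hball] at this

theorem IsFullLattice.exists_mem_notMem {L : AddSubgroup E3} (hL : IsFullLattice L)
    {P : Submodule ℝ E3} (hP : P ≠ ⊤) : ∃ x ∈ L, x ∉ P := by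
  obtain ⟨b, hb⟩ := hL.exists_basis_coe_eq_span
  by_contra! h
  refine hP (eq_top_iff.2 ?_)
  rw [← b.span_eq, span_le]
  rintro _ ⟨i, rfl⟩
  exact h _ (hb ▸ subset_span ⟨i, rfl⟩ : b i ∈ (L : Set E3))

theorem statement4_general (P : Submodule ℝ E3) (hP : Module.finrank ℝ P = 2)
    (R : E3 ≃ₗᵢ[ℝ] E3)
    (hR₁ : ∀ x ∈ P, R x = x) (hR₂ : ∀ x ∈ Pᗮ, R x = -x)
    (L : AddSubgroup E3) (hL : IsFullLattice L)
    (hinv : R '' (L : Set E3) = (L : Set E3))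
    (v₁ v₂ : E3) (hv₁ : v₁ ∈ L ∧ v₁ ∈ P) (hv₂ : v₂ ∈ L ∧ v₂ ∈ P)
    (hbasis : ∀ x : E3, (x ∈ L ∧ x ∈ P) ↔ ∃ m n : ℤ, x = m • v₁ + n • v₂) :
    (∃ w : E3, w ∈ L ∧ w ∉ P ∧
      (∀ y : E3, y ∈ L → y ∉ P →
        Metric.infDist w (P : Set E3) ≤ Metric.infDist y (P : Set E3)) ∧
      ((P.orthogonalProjection w : E3) ∈
        ({0, (1/2 : ℝ) • v₁, (1/2 : ℝ) • v₂, (1/2 : ℝ) • (v₁ + v₂)} : Set E3)) ∧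
      (∀ x ∈ L, ∃ (v : E3) (k : ℤ), (v ∈ L ∧ v ∈ P) ∧ x = v + k • w)) ∧
    (IsVerticalLattice P L ↔
      ∃ w : E3, w ∈ L ∧ w ∉ P ∧
        (∀ y : E3, y ∈ L → y ∉ P →
          Metric.infDist w (P : Set E3) ≤ Metric.infDist y (P : Set E3)) ∧
        (P.orthogonalProjection w : E3) = 0 ∧
        (∀ x ∈ L, ∃ (v : E3) (k : ℤ), (v ∈ L ∧ v ∈ P) ∧ x = v + k • w)) := by
  have hPtop : P ≠ ⊤ := fun h => by
    rw [h, finrank_top, finrank_euclideanSpace_fin] at hP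
    norm_num at hP
  obtain ⟨x₀, hx₀L, hx₀P⟩ := hL.exists_mem_notMem hPtop
  obtain ⟨e, he, rfl⟩ := exists_norm_eq_one_eq_orthogonal_span_singleton P
    (by rw [hP, finrank_euclideanSpace_fin])
  have hR : ∀ x, R x = x - (2 * ⟪e, x⟫) • e := apply_eq_sub_two_inner_smul R he hR₁
    (hR₂ e (le_orthogonal_orthogonal _ (mem_span_singleton_self e)))
  have hRL : ∀ x ∈ L, R x ∈ L := fun x hx => hinv.subset ⟨x, hx, rfl⟩
  obtain ⟨ε, hε, hεL⟩ := hL.exists_forall_le_norm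
  obtain ⟨w₀, hw₀L, hgen⟩ := AddSubgroup.exists_mem_forall_eq_zsmul_of_isolated_zero
    (AddMonoidHom.mk' (fun x => ⟪e, x⟫) (inner_add_right e)) L (half_pos hε)
    fun x hx => half_le_abs_inner_of_apply_mem R he hR hRL hεL hx
  obtain ⟨w, hwL, hwe, hproj⟩ := exists_inner_eq_and_starProjection_mem_halves R he hR hw₀L
    (hRL w₀ hw₀L) hv₁ hv₂ fun x => (hbasis x).1
  have hgen' : ∀ x ∈ L, ∃ k : ℤ, ⟪e, x⟫ = k • ⟪e, w⟫ := hwe ▸ hgen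
  have hcov := exists_eq_add_zsmul_of_forall_inner_eq_zsmul hwL hgen'
  refine ⟨⟨w, hwL, notMem_of_forall_mem_eq_add_zsmul hcov hx₀L hx₀P,
    fun y => infDist_le_of_forall_mem_eq_add_zsmul hcov, hproj, hcov⟩, ?_, ?_⟩
  · rintro ⟨w', hw', hL'⟩
    have hcov' : ∀ x ∈ L, _ := fun x => (hL' x).1
    refine ⟨w', (hL' w').2 ⟨0, 1, ⟨L.zero_mem, zero_mem _⟩, by simp⟩,
      notMem_of_forall_mem_eq_add_zsmul hcov' hx₀L hx₀P,
      fun y => infDist_le_of_forall_mem_eq_add_zsmul hcov',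
      congrArg Subtype.val (orthogonalProjectionOnto_eq_zero_iff.2 hw'), hcov'⟩
  · rintro ⟨w, hwL, -, -, hw0, hcov⟩
    refine ⟨w, orthogonalProjectionOnto_eq_zero_iff.1 (Subtype.ext hw0), fun x => ⟨hcov x, ?_⟩⟩
    rintro ⟨v, k, ⟨hv, -⟩, rfl⟩
    exact L.add_mem hv (L.zsmul_mem hwL k)

/-- With `L` a full-rank lattice invariant under the reflection in the plane
`P` and `L₀ = L ∩ P`, for any basis `{v₁, v₂}` of the rank-2 lattice `L₀` there is
`w ∈ L ∖ L₀` of minimal distance to `P`, whose orthogonal projection to `P` lies in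
`{0, v₁/2, v₂/2, (v₁+v₂)/2}`, with `L = ⋃ₖ (L₀ + k w)`; moreover `L` is a vertical
translation lattice with respect to `P` iff such `w` can be chosen projecting to `0`. -/
theorem statement4 (P : Submodule ℝ E3) (hP : Module.finrank ℝ P = 2)
    (R : E3 ≃ₗᵢ[ℝ] E3)
    (hR₁ : ∀ x ∈ P, R x = x) (hR₂ : ∀ x ∈ Pᗮ, R x = -x)
    (L : AddSubgroup E3) (hL : IsFullLattice L)
    (hinv : R '' (L : Set E3) = (L : Set E3))
    (v₁ v₂ : E3) (hv₁ : v₁ ∈ L ∧ v₁ ∈ P) (hv₂ : v₂ ∈ L ∧ v₂ ∈ P)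
    (hindep : LinearIndependent ℝ ![v₁, v₂])
    (hbasis : ∀ x : E3, (x ∈ L ∧ x ∈ P) ↔ ∃ m n : ℤ, x = m • v₁ + n • v₂) :
    (∃ w : E3, w ∈ L ∧ w ∉ P ∧
      (∀ y : E3, y ∈ L → y ∉ P →
        Metric.infDist w (P : Set E3) ≤ Metric.infDist y (P : Set E3)) ∧
      ((P.orthogonalProjection w : E3) ∈
        ({0, (1/2 : ℝ) • v₁, (1/2 : ℝ) • v₂, (1/2 : ℝ) • (v₁ + v₂)} : Set E3)) ∧
      (∀ x ∈ L, ∃ (v : E3) (k : ℤ), (v ∈ L ∧ v ∈ P) ∧ x = v + k • w)) ∧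
    (IsVerticalLattice P L ↔
      ∃ w : E3, w ∈ L ∧ w ∉ P ∧
        (∀ y : E3, y ∈ L → y ∉ P →
          Metric.infDist w (P : Set E3) ≤ Metric.infDist y (P : Set E3)) ∧
        (P.orthogonalProjection w : E3) = 0 ∧
        (∀ x ∈ L, ∃ (v : E3) (k : ℤ), (v ∈ L ∧ v ∈ P) ∧ x = v + k • w)) :=
  statement4_general P hP R hR₁ hR₂ L hL hinv v₁ v₂ hv₁ hv₂ hbasis

end
end

section
/- Let Π be a plane through the origin in ℝ³, let L be a full-rank lattice invariant under the reflection in Π, set L₀ := L ∩ Π, and let w ∈ L ∖ L₀ be of minimal distance to Π among points of L ∖ L₀ with L = ⋃_{k∈ℤ}(L₀ + kw). Assume L is not a vertical translation lattice with respect to Π (equivalently, the orthogonal projection of w onto Π is nonzero and is the midpoint of 0 and a point of L₀). Then for every k ∈ ℤ and every x ∈ L₀ + kw, the orthogonal projection of x onto Π belongs to L if and only if k is even. -/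
noncomputable section

/-!
The reflection `R` in `P` is `x ↦ 2 • proj_P x - x`, so `w + R w = 2 • proj_P w` lies in `L`.
If `proj_P w` itself were in `L`, then `L = L₀ + ℤ (w - proj_P w)` with `w - proj_P w ⊥ P`,
i.e. `L` would be vertical. Hence `proj_P w` has order two modulo `L`, and
`proj_P (v + k • w) = v + k • proj_P w` lies in `L` exactly when `k` is even.
-/

open Submodule

theorem AddSubgroup.zsmul_mem_iff_even {G : Type*} [AddCommGroup G] {L : AddSubgroup G} {p : G}
    (h2p : 2 • p ∈ L) (hp : p ∉ L) (k : ℤ) : k • p ∈ L ↔ Even k := by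
  have horder : addOrderOf (p : G ⧸ L) = 2 := by
    refine addOrderOf_eq_prime ?_ ?_
    · rw [← QuotientAddGroup.mk_nsmul, QuotientAddGroup.eq_zero_iff]
      exact h2p
    · rwa [Ne, QuotientAddGroup.eq_zero_iff]
  rw [even_iff_two_dvd, ← QuotientAddGroup.eq_zero_iff, QuotientAddGroup.mk_zsmul,
    ← addOrderOf_dvd_iff_zsmul_eq_zero, horder, Nat.cast_ofNat]

section Reflection

variable {𝕜 E : Type*} [RCLike 𝕜] [NormedAddCommGroup E] [InnerProductSpace 𝕜 E]
  {K : Submodule 𝕜 E} [K.HasOrthogonalProjection]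

theorem Submodule.apply_eq_reflection {R : E →ₗ[𝕜] E}
    (hR₁ : ∀ x ∈ K, R x = x) (hR₂ : ∀ x ∈ Kᗮ, R x = -x) (x : E) :
    R x = K.reflection x := by
  have hsplit : x = K.starProjection x + (x - K.starProjection x) := by abel
  conv_lhs => rw [hsplit, map_add, hR₁ _ (K.starProjection_apply_mem x),
    hR₂ _ (K.sub_starProjection_mem_orthogonal x)]
  rw [reflection_apply]
  module

theorem Submodule.two_smul_starProjection_mem {L : AddSubgroup E}
    (hL : ∀ x ∈ L, K.reflection x ∈ L) {w : E} (hw : w ∈ L) :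
    2 • K.starProjection w ∈ L := by
  have hsum : w + K.reflection w = 2 • K.starProjection w := by
    rw [reflection_apply]
    abel
  exact hsum ▸ L.add_mem hw (hL w hw)

end Reflection

theorem isVerticalLattice_of_starProjection_mem {P : Submodule ℝ E3} {L : AddSubgroup E3}
    {w : E3} (hwL : w ∈ L)
    (hdecomp : ∀ x ∈ L, ∃ (v : E3) (k : ℤ), (v ∈ L ∧ v ∈ P) ∧ x = v + k • w)
    (hpL : P.starProjection w ∈ L) :
    IsVerticalLattice P L := by
  set p := P.starProjection w
  refine ⟨w - p, P.sub_starProjection_mem_orthogonal w, fun x => ⟨fun hx => ?_, ?_⟩⟩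
  · obtain ⟨u, j, ⟨huL, huP⟩, rfl⟩ := hdecomp x hx
    refine ⟨u + j • p, j, ⟨L.add_mem huL (L.zsmul_mem hpL j),
      P.add_mem huP (zsmul_mem (P.starProjection_apply_mem w) j)⟩, ?_⟩
    module
  · rintro ⟨u, j, ⟨huL, -⟩, rfl⟩
    have hrewrite : u + j • (w - p) = u - j • p + j • w := by module
    rw [hrewrite]
    exact L.add_mem (L.sub_mem huL (L.zsmul_mem hpL j)) (L.zsmul_mem hwL j)

theorem statement5_general (P : Submodule ℝ E3)
    (R : E3 ≃ₗᵢ[ℝ] E3)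
    (hR₁ : ∀ x ∈ P, R x = x) (hR₂ : ∀ x ∈ Pᗮ, R x = -x)
    (L : AddSubgroup E3)
    (hinv : R '' (L : Set E3) = (L : Set E3))
    (w : E3) (hwL : w ∈ L)
    (hdecomp : ∀ x ∈ L, ∃ (v : E3) (k : ℤ), (v ∈ L ∧ v ∈ P) ∧ x = v + k • w)
    (hnotvert : ¬ IsVerticalLattice P L) :
    ∀ (k : ℤ) (v : E3), v ∈ L → v ∈ P →
      ((P.orthogonalProjectionOnto (v + k • w) : E3) ∈ L ↔ Even k) := by
  intro k v hvL hvP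
  have hreflL : ∀ x ∈ L, P.reflection x ∈ L := fun x hx => by
    rw [← P.apply_eq_reflection (R := R.toLinearMap) hR₁ hR₂]
    exact hinv.subset ⟨x, hx, rfl⟩
  have h2p : 2 • P.starProjection w ∈ L := P.two_smul_starProjection_mem hreflL hwL
  have hp : P.starProjection w ∉ L := fun hpL =>
    hnotvert (isVerticalLattice_of_starProjection_mem hwL hdecomp hpL)
  rw [coe_orthogonalProjectionOnto_apply, map_add, map_zsmul,
    P.starProjection_eq_self_iff.mpr hvP, L.add_mem_cancel_left hvL]
  exact L.zsmul_mem_iff_even h2p hp k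

/-- With `L` a full-rank lattice invariant under the reflection in the
plane `P`, `L₀ = L ∩ P`, and `w ∈ L ∖ L₀` of minimal distance to `P` with
`L = ⋃ₖ (L₀ + k w)`, if `L` is not a vertical translation lattice with respect to `P`,
then for every `k ∈ ℤ` and every `x ∈ L₀ + k w`, the orthogonal projection of `x` onto `P`
belongs to `L` iff `k` is even. -/
theorem statement5 (P : Submodule ℝ E3) (hP : Module.finrank ℝ P = 2)
    (R : E3 ≃ₗᵢ[ℝ] E3)
    (hR₁ : ∀ x ∈ P, R x = x) (hR₂ : ∀ x ∈ Pᗮ, R x = -x)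
    (L : AddSubgroup E3) (hL : IsFullLattice L)
    (hinv : R '' (L : Set E3) = (L : Set E3))
    (w : E3) (hwL : w ∈ L) (hwP : w ∉ P)
    (hmin : ∀ y : E3, y ∈ L → y ∉ P →
      Metric.infDist w (P : Set E3) ≤ Metric.infDist y (P : Set E3))
    (hdecomp : ∀ x ∈ L, ∃ (v : E3) (k : ℤ), (v ∈ L ∧ v ∈ P) ∧ x = v + k • w)
    (hnotvert : ¬ IsVerticalLattice P L) :
    ∀ (k : ℤ) (v : E3), v ∈ L → v ∈ P →
      ((P.orthogonalProjectionOnto (v + k • w) : E3) ∈ L ↔ Even k) :=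
  statement5_general P R hR₁ hR₂ L hinv w hwL hdecomp hnotvert

end
end

section
/- Let L be a full-rank lattice in ℝ² that is invariant under the reflection (x, y) ↦ (−x, y). Then there exist nonzero real numbers d₁, d₂ such that, for the diagonal linear map D = diag(d₁, d₂), either D(L) = Λ₍₁,₀₎ or D(L) = Λ₍₁,₁₎; equivalently, L is the image of Λ₍₁,₀₎ or of Λ₍₁,₁₎ under an invertible diagonal linear map. -/
noncomputable section

/-- The plane `ℝ²`, as the space of pairs of reals. -/
abbrev V2 := Fin 2 → ℝ

/-- A full-rank lattice in `ℝ²`: the set of integer linear combinations of an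
`ℝ`-basis of `ℝ²`. -/
def IsFullLattice2 (L : AddSubgroup V2) : Prop :=
  ∃ b : Module.Basis (Fin 2) ℝ V2,
    ∀ x, x ∈ L ↔ ∃ c : Fin 2 → ℤ, x = ∑ i, (c i : ℝ) • b i

/-- The square lattice `Λ₍₁,₀₎ = ℤ²`. -/
def squareLattice : Set V2 := {x | ∃ m n : ℤ, x = ![(m : ℝ), (n : ℝ)]}

/-- The square-centred lattice `Λ₍₁,₁₎`: integer vectors whose two coordinates have the
same parity. -/
def squareCentredLattice : Set V2 :=
  {x | ∃ m n : ℤ, (m % 2 = n % 2) ∧ x = ![(m : ℝ), (n : ℝ)]}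

/-!
The points of `L` on the two axes form discrete, hence cyclic, subgroups `aℤ × 0` and `0 × cℤ`.
For `v ∈ L` and its mirror image `σ v`, the vectors `v - σ v = (2 v₀, 0)` and `v + σ v = (0, 2 v₁)`
lie on the axes, so `L ⊆ (a/2)ℤ × (c/2)ℤ`, and `a, c ≠ 0` because `L` spans `ℝ²`. Since
`v = (v₀, 0) + (0, v₁)`, the point `(v₀, 0)` lies in `L` iff `(0, v₁)` does, i.e. the two
half-integer coordinates of a lattice point have the same parity. So either `L = aℤ × cℤ`, or `L`
contains a point with both coordinates odd and is the set of `(m a/2, n c/2)` with `m ≡ n mod 2`;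
rescaling by `diag(1/a, 1/c)`, resp. `diag(2/a, 2/c)`, gives `Λ₍₁,₀₎`, resp. `Λ₍₁,₁₎`.
-/

open AddSubgroup

theorem Pi.single_zero_fin_two {α : Type*} [Zero α] (x : α) :
    (Pi.single 0 x : Fin 2 → α) = ![x, 0] := by
  ext i; fin_cases i <;> rfl

theorem Pi.single_one_fin_two {α : Type*} [Zero α] (x : α) :
    (Pi.single 1 x : Fin 2 → α) = ![0, x] := by
  ext i; fin_cases i <;> rfl

theorem AddSubgroup.exists_comap_eq_zmultiples {G E : Type*} [AddCommGroup G] [LinearOrder G]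
    [IsOrderedAddMonoid G] [TopologicalSpace G] [OrderTopology G] [Archimedean G]
    [AddCommGroup E] [TopologicalSpace E] (L : AddSubgroup E) [DiscreteTopology L]
    (f : G →+ E) (hf : Continuous f) (hinj : Function.Injective f) :
    ∃ a : G, L.comap f = zmultiples a := by
  have : DiscreteTopology (L.comap f) :=
    DiscreteTopology.preimage_of_continuous_injective (L : Set E) hf hinj
  obtain ⟨a, ha⟩ := (L.comap f).isAddCyclic_iff_exists_zmultiples_eq_top.mp
    (discrete_iff_addCyclic.mpr this)
  exact ⟨a, ha.symm⟩

namespace IsFullLattice2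

variable {L : AddSubgroup V2}

theorem discreteTopology (hL : IsFullLattice2 L) : DiscreteTopology L := by
  obtain ⟨b, hb⟩ := hL
  obtain rfl : L = (Submodule.span ℤ (Set.range b)).toAddSubgroup := by
    ext x
    simp only [hb, Submodule.mem_toAddSubgroup, Submodule.mem_span_range_iff_exists_fun,
      Int.cast_smul_eq_zsmul, eq_comm]
  infer_instance

theorem exists_single_mem_iff (hL : IsFullLattice2 L) (i : Fin 2) :
    ∃ a : ℝ, ∀ x, Pi.single i x ∈ L ↔ x ∈ zmultiples a := by
  have := hL.discreteTopology
  obtain ⟨a, ha⟩ := L.exists_comap_eq_zmultiples (AddMonoidHom.single (fun _ : Fin 2 => ℝ) i)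
    (continuous_single (A := fun _ : Fin 2 => ℝ) i)
    (Pi.single_injective (M := fun _ : Fin 2 => ℝ) i)
  exact ⟨a, fun x => by rw [← ha]; rfl⟩

theorem exists_mem_apply_ne_zero (hL : IsFullLattice2 L) (i : Fin 2) : ∃ v ∈ L, v i ≠ 0 := by
  obtain ⟨b, hb⟩ := hL
  by_contra! h
  have hbi : ∀ j, b j i = 0 := fun j => h _ ((hb _).2 ⟨Pi.single j 1, by fin_cases j <;> simp⟩)
  simpa [hbi] using congrFun (b.sum_repr (Pi.single i 1)) i

end IsFullLattice2

theorem half_mul_mem_zmultiples_iff {a : ℝ} (ha : a ≠ 0) (m : ℤ) :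
    (m : ℝ) * (a / 2) ∈ zmultiples a ↔ Even m := by
  simp only [mem_zmultiples_iff, zsmul_eq_mul]
  constructor
  · rintro ⟨k, hk⟩
    refine ⟨k, ?_⟩
    have : (m : ℝ) = k + k := by
      field_simp at hk
      linarith
    exact_mod_cast this
  · rintro ⟨k, rfl⟩
    exact ⟨k, by push_cast; ring⟩

def gridSet (P : ℤ → ℤ → Prop) (a c : ℝ) : Set V2 :=
  {v | ∃ m n : ℤ, P m n ∧ v = ![m * a, n * c]}

theorem image_diag_gridSet (P : ℤ → ℤ → Prop) (d₁ d₂ a c : ℝ) :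
    (fun x : V2 => ![d₁ * x 0, d₂ * x 1]) '' gridSet P a c = gridSet P (d₁ * a) (d₂ * c) := by
  ext x
  simp only [gridSet, Set.mem_image, Set.mem_ofPred_eq]
  constructor
  · rintro ⟨_, ⟨m, n, h, rfl⟩, rfl⟩
    exact ⟨m, n, h, by simp only [Matrix.cons_val_zero, Matrix.cons_val_one]; ring_nf⟩
  · rintro ⟨m, n, h, rfl⟩
    exact ⟨_, ⟨m, n, h, rfl⟩, by simp only [Matrix.cons_val_zero, Matrix.cons_val_one]; ring_nf⟩

theorem squareLattice_eq_gridSet : squareLattice = gridSet (fun _ _ => True) 1 1 := by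
  ext; simp [squareLattice, gridSet]

theorem squareCentredLattice_eq_gridSet :
    squareCentredLattice = gridSet (fun m n => m % 2 = n % 2) 1 1 := by
  ext; simp [squareCentredLattice, gridSet]

section AxisSubgroups

variable {L : AddSubgroup V2} {a c : ℝ} {v w : V2}

theorem fst_mem_iff_snd_mem (hv : v ∈ L) : ![v 0, 0] ∈ L ↔ ![0, v 1] ∈ L := by
  have hv' : ![v 0, 0] + ![0, v 1] ∈ L := by
    convert hv using 1
    ext i; fin_cases i <;> simp
  exact ⟨fun h => (L.add_mem_cancel_left h).1 hv', fun h => (L.add_mem_cancel_right h).1 hv'⟩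

theorem two_mul_fst_mem (hrefl : ∀ v ∈ L, ![-(v 0), v 1] ∈ L) (hv : v ∈ L) :
    ![2 * v 0, 0] ∈ L := by
  convert L.sub_mem hv (hrefl v hv) using 1
  ext i; fin_cases i <;> simp; ring

theorem two_mul_snd_mem (hrefl : ∀ v ∈ L, ![-(v 0), v 1] ∈ L) (hv : v ∈ L) :
    ![0, 2 * v 1] ∈ L := by
  convert L.add_mem hv (hrefl v hv) using 1
  ext i; fin_cases i <;> simp; ring

theorem exists_eq_half_mul (hx : ∀ x, ![x, 0] ∈ L ↔ x ∈ zmultiples a)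
    (hy : ∀ y, ![0, y] ∈ L ↔ y ∈ zmultiples c) (hrefl : ∀ v ∈ L, ![-(v 0), v 1] ∈ L)
    (hv : v ∈ L) : ∃ m n : ℤ, v = ![m * (a / 2), n * (c / 2)] := by
  obtain ⟨m, hm⟩ := mem_zmultiples_iff.1 ((hx _).1 (two_mul_fst_mem hrefl hv))
  obtain ⟨n, hn⟩ := mem_zmultiples_iff.1 ((hy _).1 (two_mul_snd_mem hrefl hv))
  rw [zsmul_eq_mul] at hm hn
  refine ⟨m, n, ?_⟩
  ext i; fin_cases i <;> simp <;> linarith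

theorem even_iff_even_of_mem (ha : a ≠ 0) (hc : c ≠ 0)
    (hx : ∀ x, ![x, 0] ∈ L ↔ x ∈ zmultiples a) (hy : ∀ y, ![0, y] ∈ L ↔ y ∈ zmultiples c)
    {m n : ℤ} (hv : ![m * (a / 2), n * (c / 2)] ∈ L) : Even m ↔ Even n := by
  simpa [hx, hy, half_mul_mem_zmultiples_iff ha, half_mul_mem_zmultiples_iff hc] using
    fst_mem_iff_snd_mem hv

theorem half_mul_mem_of_even (ha : a ≠ 0) (hc : c ≠ 0)
    (hx : ∀ x, ![x, 0] ∈ L ↔ x ∈ zmultiples a) (hy : ∀ y, ![0, y] ∈ L ↔ y ∈ zmultiples c)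
    {m n : ℤ} (hm : Even m) (hn : Even n) : ![m * (a / 2), n * (c / 2)] ∈ L := by
  convert L.add_mem ((hx _).2 ((half_mul_mem_zmultiples_iff ha m).2 hm))
    ((hy _).2 ((half_mul_mem_zmultiples_iff hc n).2 hn)) using 1
  ext i; fin_cases i <;> simp

theorem coe_eq_gridSet_of_forall_fst_mem (hx : ∀ x, ![x, 0] ∈ L ↔ x ∈ zmultiples a)
    (hy : ∀ y, ![0, y] ∈ L ↔ y ∈ zmultiples c) (h : ∀ v ∈ L, ![v 0, 0] ∈ L) :
    (L : Set V2) = gridSet (fun _ _ => True) a c := by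
  ext v
  rw [SetLike.mem_coe]
  constructor
  · intro hv
    obtain ⟨m, hm⟩ := mem_zmultiples_iff.1 ((hx _).1 (h v hv))
    obtain ⟨n, hn⟩ := mem_zmultiples_iff.1 ((hy _).1 ((fst_mem_iff_snd_mem hv).1 (h v hv)))
    rw [zsmul_eq_mul] at hm hn
    exact ⟨m, n, trivial, by ext i; fin_cases i <;> simp [hm, hn]⟩
  · rintro ⟨m, n, -, rfl⟩
    convert L.add_mem ((hx _).2 (intCast_mul_mem_zmultiples a m))
      ((hy _).2 (intCast_mul_mem_zmultiples c n)) using 1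
    ext i; fin_cases i <;> simp

theorem coe_eq_gridSet_of_fst_not_mem (ha : a ≠ 0) (hc : c ≠ 0)
    (hx : ∀ x, ![x, 0] ∈ L ↔ x ∈ zmultiples a) (hy : ∀ y, ![0, y] ∈ L ↔ y ∈ zmultiples c)
    (hrefl : ∀ v ∈ L, ![-(v 0), v 1] ∈ L) (hw : w ∈ L) (hw0 : ![w 0, 0] ∉ L) :
    (L : Set V2) = gridSet (fun m n => m % 2 = n % 2) (a / 2) (c / 2) := by
  obtain ⟨p, q, rfl⟩ := exists_eq_half_mul hx hy hrefl hw
  have hp : ¬Even p := by simpa [hx, half_mul_mem_zmultiples_iff ha] using hw0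
  have hq : ¬Even q := by rwa [← even_iff_even_of_mem ha hc hx hy hw]
  ext v
  rw [SetLike.mem_coe]
  constructor
  · intro hv
    obtain ⟨m, n, rfl⟩ := exists_eq_half_mul hx hy hrefl hv
    have hmn := even_iff_even_of_mem ha hc hx hy hv
    rw [Int.even_iff, Int.even_iff] at hmn
    exact ⟨m, n, by omega, rfl⟩
  · rintro ⟨m, n, hmn, rfl⟩
    rw [Int.even_iff] at hp hq
    by_cases hm : Even m
    · rw [Int.even_iff] at hm
      exact half_mul_mem_of_even ha hc hx hy (Int.even_iff.2 hm) (Int.even_iff.2 (by omega))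
    · rw [Int.even_iff] at hm
      have hshift := half_mul_mem_of_even ha hc hx hy (m := m - p) (n := n - q)
        (Int.even_iff.2 (by omega)) (Int.even_iff.2 (by omega))
      convert L.add_mem hw hshift using 1
      ext i; fin_cases i <;> simp <;> ring

end AxisSubgroups

/-- A full-rank lattice in `ℝ²` invariant under the reflection
`(x, y) ↦ (-x, y)` is mapped by some invertible diagonal linear map `D = diag(d₁, d₂)`
onto either the square lattice `Λ₍₁,₀₎` or the square-centred lattice `Λ₍₁,₁₎`. -/
theorem statement6 (L : AddSubgroup V2) (hL : IsFullLattice2 L)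
    (hinv : (fun x : V2 => ![-(x 0), x 1]) '' (L : Set V2) = (L : Set V2)) :
    ∃ d₁ d₂ : ℝ, d₁ ≠ 0 ∧ d₂ ≠ 0 ∧
      ((fun x : V2 => ![d₁ * x 0, d₂ * x 1]) '' (L : Set V2) = squareLattice ∨
       (fun x : V2 => ![d₁ * x 0, d₂ * x 1]) '' (L : Set V2) = squareCentredLattice) := by
  obtain ⟨a, hx⟩ := hL.exists_single_mem_iff 0
  obtain ⟨c, hy⟩ := hL.exists_single_mem_iff 1
  simp only [Pi.single_zero_fin_two, Pi.single_one_fin_two] at hx hy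
  have hrefl : ∀ v ∈ L, ![-(v 0), v 1] ∈ L := fun v hv => by
    rw [← SetLike.mem_coe, ← hinv]
    exact Set.mem_image_of_mem _ hv
  have ha : a ≠ 0 := by
    obtain ⟨u, hu, hu0⟩ := hL.exists_mem_apply_ne_zero 0
    rintro rfl
    simpa [hu0] using (hx _).1 (two_mul_fst_mem hrefl hu)
  have hc : c ≠ 0 := by
    obtain ⟨u, hu, hu1⟩ := hL.exists_mem_apply_ne_zero 1
    rintro rfl
    simpa [hu1] using (hy _).1 (two_mul_snd_mem hrefl hu)
  by_cases h : ∀ v ∈ L, ![v 0, 0] ∈ L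
  · refine ⟨a⁻¹, c⁻¹, inv_ne_zero ha, inv_ne_zero hc, Or.inl ?_⟩
    rw [coe_eq_gridSet_of_forall_fst_mem hx hy h, image_diag_gridSet, inv_mul_cancel₀ ha,
      inv_mul_cancel₀ hc, squareLattice_eq_gridSet]
  · push Not at h
    obtain ⟨w, hw, hw0⟩ := h
    have ha₂ : a / 2 ≠ 0 := div_ne_zero ha two_ne_zero
    have hc₂ : c / 2 ≠ 0 := div_ne_zero hc two_ne_zero
    refine ⟨(a / 2)⁻¹, (c / 2)⁻¹, inv_ne_zero ha₂, inv_ne_zero hc₂, Or.inr ?_⟩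
    rw [coe_eq_gridSet_of_fst_not_mem ha hc hx hy hrefl hw hw0, image_diag_gridSet,
      inv_mul_cancel₀ ha₂, inv_mul_cancel₀ hc₂, squareCentredLattice_eq_gridSet]

end
end

section
/- Let u₁ = (1, 0) and u₂ = (1/2, √3/2) in ℝ², let R be the reflection in the line through the origin and u₁, and let R' be the reflection in the line through the origin and u₂. If L is a full-rank lattice in ℝ² preserved by both R and R', then there exists a real number a > 0 such that aL ∈ {L₍₃,₆₎, L₍₃,₆₎ᶜ}. -/
/-!
The composite of the two reflections is the rotation `ρ` by `120°`, so `L` is `ρ`-invariant.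
If `v` is a shortest nonzero vector of `L`, then `L = ℤv + ℤρv`: reducing the coordinates of a
lattice vector in the basis `v, ρv` modulo `ℤ` leaves a lattice vector of squared length at most
`3/4 · |v|²`, which must be `0`. The reflection in the `x`-axis maps `v` to one of the six shortest
vectors `±v, ±ρv, ±(v + ρv)`, and this forces one of them onto a coordinate axis. Rescaling it to
`(1, 0)` gives the triangular lattice, rescaling it to `(0, √3)` the triangle-centred one.
-/

noncomputable section

/-- `u₁ = (1, 0)`. -/
def u₁ : V2 := ![1, 0]

/-- `u₂ = (1/2, √3/2)`. -/
def u₂ : V2 := ![1 / 2, Real.sqrt 3 / 2]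

/-- The triangular lattice `L₍₃,₆₎ = ℤu₁ + ℤu₂`. -/
def triLattice : Set V2 := {x | ∃ m n : ℤ, x = m • u₁ + n • u₂}

/-- The triangle-centred lattice `L₍₃,₆₎ᶜ = ℤ(u₁ + u₂) + ℤ(2u₁ - u₂)`. -/
def triCentredLattice : Set V2 :=
  {x | ∃ m n : ℤ, x = m • (u₁ + u₂) + n • ((2 : ℤ) • u₁ - u₂)}

/-- The reflection in the line through the origin and `u₁` (the `x`-axis). -/
def reflU₁ : V2 → V2 := fun x => ![x 0, -(x 1)]

/-- The reflection in the line through the origin and `u₂` (the line at angle `π/3`). -/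
def reflU₂ : V2 → V2 := fun x =>
  ![-(x 0) / 2 + (Real.sqrt 3 / 2) * x 1, (Real.sqrt 3 / 2) * x 0 + x 1 / 2]

open Submodule

namespace PlaneLattice

def sqNorm (x : V2) : ℝ := x 0 ^ 2 + x 1 ^ 2

def rot120 : V2 →ₗ[ℝ] V2 where
  toFun x := ![-(x 0) / 2 - (√3 / 2) * x 1, (√3 / 2) * x 0 - x 1 / 2]
  map_add' x y := by ext i; fin_cases i <;> simp <;> ring
  map_smul' a x := by ext i; fin_cases i <;> simp <;> ring

@[simp] lemma rot120_apply_zero (x : V2) : rot120 x 0 = -(x 0) / 2 - (√3 / 2) * x 1 := rfl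

@[simp] lemma rot120_apply_one (x : V2) : rot120 x 1 = (√3 / 2) * x 0 - x 1 / 2 := rfl

lemma ext_fin_two {x y : V2} (h0 : x 0 = y 0) (h1 : x 1 = y 1) : x = y :=
  funext <| Fin.forall_fin_two.2 ⟨h0, h1⟩

lemma sqNorm_pos {x : V2} (hx : x ≠ 0) : 0 < sqNorm x := by
  by_contra! h
  unfold sqNorm at h
  exact hx (ext_fin_two (show x 0 = 0 by nlinarith [sq_nonneg (x 0), sq_nonneg (x 1)])
    (show x 1 = 0 by nlinarith [sq_nonneg (x 0), sq_nonneg (x 1)]))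

lemma abs_le_sqrt_of_sqNorm_le {x : V2} {r : ℝ} (h : sqNorm x ≤ r) (i : Fin 2) :
    |x i| ≤ √r := by
  unfold sqNorm at h
  fin_cases i <;> exact Real.abs_le_sqrt (by simp; nlinarith [sq_nonneg (x 0), sq_nonneg (x 1)])

lemma sqNorm_smul_add_smul_rot120 (a b : ℝ) (v : V2) :
    sqNorm (a • v + b • rot120 v) = (a ^ 2 - a * b + b ^ 2) * sqNorm v := by
  simp only [sqNorm, Pi.add_apply, Pi.smul_apply, smul_eq_mul, rot120_apply_zero,
    rot120_apply_one]
  linear_combination b ^ 2 * (v 0 ^ 2 + v 1 ^ 2) / 4 * Real.sq_sqrt (show (0 : ℝ) ≤ 3 by norm_num)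

lemma sqNorm_rot120 (x : V2) : sqNorm (rot120 x) = sqNorm x := by
  simpa using sqNorm_smul_add_smul_rot120 0 1 x

lemma sqNorm_reflU₁ (x : V2) : sqNorm (reflU₁ x) = sqNorm x := by
  simp [sqNorm, reflU₁]

lemma rot120_eq_reflU₂_reflU₁ (x : V2) : rot120 x = reflU₂ (reflU₁ x) := by
  refine ext_fin_two ?_ ?_ <;> simp [reflU₁, reflU₂] <;> ring

lemma exists_eq_smul_add_smul_rot120 {v : V2} (hv : v ≠ 0) (w : V2) :
    ∃ α β : ℝ, w = α • v + β • rot120 v := by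
  have hd : v 0 * rot120 v 1 - v 1 * rot120 v 0 ≠ 0 := by
    have hdet : v 0 * rot120 v 1 - v 1 * rot120 v 0 = √3 / 2 * sqNorm v := by
      simp only [rot120_apply_zero, rot120_apply_one, sqNorm]
      ring
    have := sqNorm_pos hv
    rw [hdet]
    positivity
  -- Cramer's rule
  refine ⟨(w 0 * rot120 v 1 - w 1 * rot120 v 0) / (v 0 * rot120 v 1 - v 1 * rot120 v 0),
    (v 0 * w 1 - v 1 * w 0) / (v 0 * rot120 v 1 - v 1 * rot120 v 0), ext_fin_two ?_ ?_⟩ <;>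
  · simp only [Pi.add_apply, Pi.smul_apply, smul_eq_mul]
    rw [div_mul_eq_mul_div, div_mul_eq_mul_div, ← add_div, eq_div_iff hd]
    ring

lemma sq_sub_mul_add_sq_le {s t : ℝ} (hs : |s| ≤ 1 / 2) (ht : |t| ≤ 1 / 2) :
    s ^ 2 - s * t + t ^ 2 ≤ 3 / 4 := by
  rw [abs_le] at hs ht
  nlinarith [mul_nonneg (sub_nonneg.2 hs.2) (neg_le_iff_add_nonneg.1 hs.1),
    mul_nonneg (sub_nonneg.2 ht.2) (neg_le_iff_add_nonneg.1 ht.1),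
    mul_nonneg (sub_nonneg.2 hs.2) (sub_nonneg.2 ht.2),
    mul_nonneg (neg_le_iff_add_nonneg.1 hs.1) (neg_le_iff_add_nonneg.1 ht.1)]

def IsShortest (L : AddSubgroup V2) (v : V2) : Prop :=
  v ∈ L ∧ v ≠ 0 ∧ ∀ w ∈ L, w ≠ 0 → sqNorm v ≤ sqNorm w

namespace IsShortest

variable {L : AddSubgroup V2} {v w : V2}

lemma eq_zero_of_sqNorm_lt (hv : IsShortest L v) (hw : w ∈ L) (h : sqNorm w < sqNorm v) :
    w = 0 := by
  by_contra hw0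
  exact (hv.2.2 w hw hw0).not_gt h

lemma of_sqNorm_eq (hv : IsShortest L v) (hw : w ∈ L) (h : sqNorm w = sqNorm v) :
    IsShortest L w := by
  refine ⟨hw, fun hw0 => ?_, fun x hx hx0 => h ▸ hv.2.2 x hx hx0⟩
  have := h ▸ sqNorm_pos hv.2.1
  simp [hw0, sqNorm] at this

lemma neg (hv : IsShortest L v) : IsShortest L (-v) :=
  hv.of_sqNorm_eq (L.neg_mem hv.1) (by simp [sqNorm])

end IsShortest

lemma exists_isShortest {L : AddSubgroup V2} (hL : IsFullLattice2 L) : ∃ v, IsShortest L v := by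
  obtain ⟨b, hb⟩ := hL
  have hLb : (L : Set V2) = span ℤ (Set.range b) := by
    ext x
    simp only [SetLike.mem_coe, hb, mem_span_range_iff_exists_fun, Int.cast_smul_eq_zsmul]
    exact exists_congr fun c => eq_comm
  have hb0 : b 0 ∈ (L : Set V2) := hLb ▸ subset_span (Set.mem_range_self 0)
  set r := sqNorm (b 0)
  have hfin : {x | x ∈ L ∧ x ≠ 0 ∧ sqNorm x ≤ r}.Finite := by
    refine (ZSpan.setFinite_inter b (Metric.isBounded_closedBall (x := 0) (r := √r))).subset ?_
    rintro x ⟨hxL, -, hxr⟩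
    refine ⟨mem_closedBall_zero_iff.2 ?_, hLb ▸ hxL⟩
    exact (pi_norm_le_iff_of_nonneg (Real.sqrt_nonneg r)).2 (abs_le_sqrt_of_sqNorm_le hxr)
  obtain ⟨v, ⟨hvL, hv0, -⟩, hmin⟩ :=
    Set.exists_min_image _ sqNorm hfin ⟨b 0, hb0, b.ne_zero 0, le_rfl⟩
  refine ⟨v, hvL, hv0, fun w hw hw0 => ?_⟩
  rcases le_total (sqNorm w) r with hwr | hrw
  · exact hmin w ⟨hw, hw0, hwr⟩
  · exact (hmin (b 0) ⟨hb0, b.ne_zero 0, le_rfl⟩).trans hrw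

section Invariant

variable {L : AddSubgroup V2} (hrot : ∀ x ∈ L, rot120 x ∈ L)
include hrot

theorem coe_eq_span_of_isShortest {v : V2} (hv : IsShortest L v) :
    (L : Set V2) = span ℤ {v, rot120 v} := by
  refine subset_antisymm (fun w hw => ?_) ?_
  · obtain ⟨α, β, rfl⟩ := exists_eq_smul_add_smul_rot120 hv.2.1 w
    have hmem : (round α : ℝ) • v + (round β : ℝ) • rot120 v ∈ L := by
      simp only [Int.cast_smul_eq_zsmul]
      exact L.add_mem (L.zsmul_mem hv.1 _) (L.zsmul_mem (hrot v hv.1) _)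
    have hsub : α • v + β • rot120 v - ((round α : ℝ) • v + (round β : ℝ) • rot120 v) =
        (α - round α) • v + (β - round β) • rot120 v := by module
    have hsmall : sqNorm (α • v + β • rot120 v - ((round α : ℝ) • v + (round β : ℝ) • rot120 v))
        < sqNorm v := by
      rw [hsub, sqNorm_smul_add_smul_rot120]
      have := sq_sub_mul_add_sq_le (abs_sub_round α) (abs_sub_round β)
      nlinarith [sqNorm_pos hv.2.1]
    have hzero := hv.eq_zero_of_sqNorm_lt (L.sub_mem hw hmem) hsmall
    rw [sub_eq_zero.1 hzero, SetLike.mem_coe, mem_span_pair]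
    exact ⟨round α, round β, by simp only [Int.cast_smul_eq_zsmul]⟩
  · exact span_le (p := L.toIntSubmodule).2 (Set.pair_subset hv.1 (hrot v hv.1))

theorem exists_isShortest_on_axis (hrefl : ∀ x ∈ L, reflU₁ x ∈ L) {v : V2}
    (hv : IsShortest L v) : ∃ w, IsShortest L w ∧ (w 1 = 0 ∨ w 0 = 0) := by
  have hspan : reflU₁ v ∈ (span ℤ {v, rot120 v} : Set V2) :=
    coe_eq_span_of_isShortest hrot hv ▸ hrefl v hv.1
  obtain ⟨m, n, hmn⟩ := mem_span_pair.1 hspan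
  replace hmn : (m : ℝ) • v + (n : ℝ) • rot120 v = reflU₁ v := by
    simpa only [Int.cast_smul_eq_zsmul] using hmn
  have hmn_norm : m ^ 2 - m * n + n ^ 2 = 1 := by
    have h := congrArg sqNorm hmn
    rw [sqNorm_smul_add_smul_rot120, sqNorm_reflU₁] at h
    exact_mod_cast mul_right_cancel₀ (sqNorm_pos hv.2.1).ne' (h.trans (one_mul _).symm)
  have e0 : m * v 0 + n * rot120 v 0 = v 0 := by simpa [reflU₁] using congrFun hmn 0
  have e1 : m * v 1 + n * rot120 v 1 = -v 1 := by simpa [reflU₁] using congrFun hmn 1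
  have hrotv : IsShortest L (rot120 v) := hv.of_sqNorm_eq (hrot v hv.1) (sqNorm_rot120 v)
  have hsum : IsShortest L (v + rot120 v) :=
    hv.of_sqNorm_eq (L.add_mem hv.1 (hrot v hv.1))
      (by simpa using sqNorm_smul_add_smul_rot120 1 1 v)
  obtain ⟨hm₁, hm₂, hn₁, hn₂⟩ : -1 ≤ m ∧ m ≤ 1 ∧ -1 ≤ n ∧ n ≤ 1 := by
    refine ⟨?_, ?_, ?_, ?_⟩ <;> nlinarith [sq_nonneg (2 * n - m), sq_nonneg (2 * m - n)]
  interval_cases m <;> interval_cases n <;> norm_num at hmn_norm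
  · exact ⟨rot120 v, hrotv, Or.inl (by simp at e1 ⊢; linarith)⟩
  · exact ⟨v, hv, Or.inr (by simp at e0; linarith)⟩
  · exact ⟨v + rot120 v, hsum, Or.inr (by simp at e0 ⊢; linarith)⟩
  · exact ⟨v + rot120 v, hsum, Or.inl (by simp at e1 ⊢; linarith)⟩
  · exact ⟨v, hv, Or.inl (by simp at e1; linarith)⟩
  · exact ⟨rot120 v, hrotv, Or.inr (by simp at e0 ⊢; linarith)⟩

end Invariant

lemma IsShortest.exists_on_pos_axis {L : AddSubgroup V2} {v : V2} (hv : IsShortest L v)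
    (hax : v 1 = 0 ∨ v 0 = 0) :
    ∃ w, IsShortest L w ∧ (w 1 = 0 ∧ 0 < w 0 ∨ w 0 = 0 ∧ 0 < w 1) := by
  have hne : v 0 ≠ 0 ∨ v 1 ≠ 0 := by
    by_contra! h
    exact hv.2.1 (ext_fin_two h.1 h.2)
  rcases hax with h | h
  · rcases (hne.resolve_right (not_not.2 h)).lt_or_gt with hlt | hgt
    · exact ⟨-v, hv.neg, Or.inl ⟨by simp [h], by simpa using hlt⟩⟩
    · exact ⟨v, hv, Or.inl ⟨h, hgt⟩⟩
  · rcases (hne.resolve_left (not_not.2 h)).lt_or_gt with hlt | hgt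
    · exact ⟨-v, hv.neg, Or.inr ⟨by simp [h], by simpa using hlt⟩⟩
    · exact ⟨v, hv, Or.inr ⟨h, hgt⟩⟩

lemma image_smul_span_rot120 (a : ℝ) (v : V2) :
    (fun x : V2 => a • x) '' (span ℤ {v, rot120 v} : Set V2) =
      span ℤ {a • v, rot120 (a • v)} := by
  rw [Set.image_smul, ← coe_pointwise_smul, smul_span, Set.smul_set_insert,
    Set.smul_set_singleton, map_smul]

lemma span_u₁_rot120 : (span ℤ {u₁, rot120 u₁} : Set V2) = triLattice := by
  have hrot : rot120 u₁ = u₂ - u₁ := by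
    refine ext_fin_two ?_ ?_ <;> simp [u₁, u₂]; ring
  ext x
  rw [SetLike.mem_coe, mem_span_pair, hrot]
  constructor
  · rintro ⟨m, n, rfl⟩
    exact ⟨m - n, n, by module⟩
  · rintro ⟨m, n, rfl⟩
    exact ⟨m + n, n, by module⟩

lemma span_vertical_rot120 :
    (span ℤ {![0, √3], rot120 ![0, √3]} : Set V2) = triCentredLattice := by
  have hv : (![0, √3] : V2) = (u₁ + u₂) - ((2 : ℤ) • u₁ - u₂) := by
    refine ext_fin_two ?_ ?_ <;> simp [u₁, u₂]; ring
  have hrot : rot120 ![0, √3] = -(u₁ + u₂) := by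
    refine ext_fin_two ?_ ?_ <;> simp [u₁, u₂]
    linear_combination -Real.mul_self_sqrt (show (0 : ℝ) ≤ 3 by norm_num) / 2
  ext x
  rw [SetLike.mem_coe, mem_span_pair, hrot, hv]
  constructor
  · rintro ⟨m, n, rfl⟩
    exact ⟨m - n, -m, by module⟩
  · rintro ⟨m, n, rfl⟩
    exact ⟨-n, -m - n, by module⟩

end PlaneLattice

/-- A full-rank lattice in `ℝ²` preserved by the reflections in the lines
through the origin and `u₁ = (1,0)`, resp. `u₂ = (1/2, √3/2)`, is - up to a positive scalar -
either the triangular lattice or the triangle-centred lattice. -/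
theorem statement12 (L : AddSubgroup V2) (hL : IsFullLattice2 L)
    (h₁ : reflU₁ '' (L : Set V2) = (L : Set V2))
    (h₂ : reflU₂ '' (L : Set V2) = (L : Set V2)) :
    ∃ a : ℝ, 0 < a ∧
      ((fun x : V2 => a • x) '' (L : Set V2) = triLattice ∨
       (fun x : V2 => a • x) '' (L : Set V2) = triCentredLattice) := by
  open PlaneLattice in
  have hrefl : ∀ x ∈ L, reflU₁ x ∈ L := fun x hx => Set.image_subset_iff.1 h₁.subset hx
  have hrot : ∀ x ∈ L, rot120 x ∈ L := fun x hx => by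
    rw [rot120_eq_reflU₂_reflU₁]
    exact Set.image_subset_iff.1 h₂.subset (hrefl x hx)
  obtain ⟨v, hv⟩ := exists_isShortest hL
  obtain ⟨w₀, hw₀, hax₀⟩ := exists_isShortest_on_axis hrot hrefl hv
  obtain ⟨w, hw, hax⟩ := hw₀.exists_on_pos_axis hax₀
  rw [coe_eq_span_of_isShortest hrot hw]
  rcases hax with ⟨hw1, hw0⟩ | ⟨hw0, hw1⟩
  · refine ⟨(w 0)⁻¹, inv_pos.2 hw0, Or.inl ?_⟩
    have hu₁ : (w 0)⁻¹ • w = u₁ := ext_fin_two (by simp [u₁, hw0.ne']) (by simp [u₁, hw1])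
    rw [image_smul_span_rot120, hu₁, span_u₁_rot120]
  · refine ⟨√3 / w 1, div_pos (by positivity) hw1, Or.inr ?_⟩
    have hvert : (√3 / w 1) • w = ![0, √3] :=
      ext_fin_two (by simp [hw0]) (by simp [hw1.ne'])
    rw [image_smul_span_rot120, hvert, span_vertical_rot120]

end
end

section
/- Let S be a linear isometry of ℝ³ of order 3 whose fixed-point set is a line ℓ through the origin (a 3-fold rotation about ℓ), let Π = ℓ^⊥, and let L be a full-rank lattice in ℝ³ preserved by S. Then: (i) L ∩ ℓ is a rank-1 lattice, i.e. L ∩ ℓ = ℤy for some nonzero y ∈ ℓ; (ii) L ∩ Π is a rank-2 lattice spanning Π; and (iii) for every x ∈ L, the orthogonal projection of 3x onto Π belongs to L ∩ Π. -/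
/-!
For `x ∈ L` the orbit sum `x + S x + S² x` lies in `L`, is fixed by `S`, and differs from
`3 x` by the orbit sum of `x - p`, where `p` is the projection of `x` to `ℓ`. The latter is
fixed by `S` but lies in `Π`, so it vanishes, and the orbit sum is `3 p`. Hence `L` contains
`3 · proj_ℓ L` and `3 · proj_Π L`, which span `ℓ` and `Π`; so the discrete groups `L ∩ ℓ` and
`L ∩ Π` are lattices of full rank in `ℓ` and `Π`, and their `ℤ`-bases give `y` and `w₁, w₂`.
-/

noncomputable section

open Submodule Module

namespace LinearIsometryEquiv

variable {𝕜 E : Type*} [RCLike 𝕜] [NormedAddCommGroup E] [InnerProductSpace 𝕜 E]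
  {S : E ≃ₗᵢ[𝕜] E} {K : Submodule 𝕜 E}

theorem pow_succ_apply (S : E ≃ₗᵢ[𝕜] E) (i : ℕ) (x : E) : (S ^ (i + 1)) x = S ((S ^ i) x) := by
  rw [pow_succ', coe_mul, Function.comp_apply]

theorem apply_sum_range_pow_apply {n : ℕ} (hn : S ^ n = 1) (x : E) :
    S (∑ i ∈ Finset.range n, (S ^ i) x) = ∑ i ∈ Finset.range n, (S ^ i) x := by
  have h := Finset.sum_range_succ (fun i ↦ (S ^ i) x) n
  rw [Finset.sum_range_succ', hn, pow_zero] at h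
  simpa only [map_sum, pow_succ_apply, add_left_inj] using h

theorem pow_apply_mem {L : AddSubgroup E} (hL : ∀ x ∈ L, S x ∈ L) {x : E} (hx : x ∈ L) (i : ℕ) :
    (S ^ i) x ∈ L := by
  induction i with
  | zero => exact hx
  | succ i ih => rw [pow_succ_apply]; exact hL _ ih

theorem apply_mem_orthogonal (hK : ∀ x ∈ K, S x = x) {x : E} (hx : x ∈ Kᗮ) : S x ∈ Kᗮ := by
  rw [mem_orthogonal] at hx ⊢
  intro z hz
  rw [← hK z hz, inner_map_map]
  exact hx z hz

theorem sum_range_pow_apply_eq_smul_starProjection [K.HasOrthogonalProjection] {n : ℕ}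
    (hn : S ^ n = 1) (hfix : ∀ x, S x = x ↔ x ∈ K) (x : E) :
    ∑ i ∈ Finset.range n, (S ^ i) x = (n : 𝕜) • K.starProjection x := by
  have hK : ∀ y ∈ K, S y = y := fun y hy ↦ (hfix y).2 hy
  set p := K.starProjection x
  set q := x - p
  have hq : q ∈ Kᗮ := sub_starProjection_mem_orthogonal x
  have hp (i : ℕ) : (S ^ i) p = p := by
    induction i with
    | zero => rfl
    | succ i ih => rw [pow_succ_apply, ih, hK p (K.starProjection_apply_mem x)]
  have hq_sum : ∑ i ∈ Finset.range n, (S ^ i) q = 0 := by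
    have h₁ : ∑ i ∈ Finset.range n, (S ^ i) q ∈ K := (hfix _).1 (apply_sum_range_pow_apply hn q)
    have h₂ : ∑ i ∈ Finset.range n, (S ^ i) q ∈ Kᗮ :=
      sum_mem fun i _ ↦
        pow_apply_mem (L := Kᗮ.toAddSubgroup) (fun _ ↦ apply_mem_orthogonal hK) hq i
    exact disjoint_def.1 K.orthogonal_disjoint _ h₁ h₂
  calc ∑ i ∈ Finset.range n, (S ^ i) x
      = ∑ i ∈ Finset.range n, ((S ^ i) p + (S ^ i) q) := by
        simp only [← map_add, q, add_sub_cancel]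
    _ = (n : 𝕜) • p := by simp [Finset.sum_add_distrib, hp, hq_sum, Nat.cast_smul_eq_nsmul]


variable [K.HasOrthogonalProjection] {n : ℕ} (hn : S ^ n = 1) (hfix : ∀ x, S x = x ↔ x ∈ K)
  {L : AddSubgroup E} (hL : ∀ x ∈ L, S x ∈ L)
include hn hfix hL

theorem smul_starProjection_mem {x : E} (hx : x ∈ L) : (n : 𝕜) • K.starProjection x ∈ L := by
  rw [← sum_range_pow_apply_eq_smul_starProjection hn hfix]
  exact sum_mem fun i _ ↦ pow_apply_mem hL hx i

theorem smul_starProjection_orthogonal_mem {x : E} (hx : x ∈ L) :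
    (n : 𝕜) • Kᗮ.starProjection x ∈ L := by
  rw [starProjection_orthogonal_val, smul_sub, Nat.cast_smul_eq_nsmul]
  exact sub_mem (nsmul_mem hx n) (smul_starProjection_mem hn hfix hL hx)

end LinearIsometryEquiv

namespace ZLattice

variable {E : Type*} [NormedAddCommGroup E] [InnerProductSpace ℝ E] [FiniteDimensional ℝ E]
  (M : Submodule ℤ E) [DiscreteTopology M]

theorem span_comap_subtype_eq_top [IsZLattice ℝ M] {W : Submodule ℝ E} {n : ℕ} (hn : n ≠ 0)
    (hW : ∀ x ∈ M, (n : ℝ) • W.starProjection x ∈ M) :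
    span ℝ (ZLattice.comap ℝ M W.subtype : Set W) = ⊤ := by
  set f : E →ₗ[ℝ] W := (n : ℝ) • (W.orthogonalProjectionOnto : E →ₗ[ℝ] W)
  have hf : LinearMap.range f = ⊤ := by
    refine eq_top_iff.2 fun w _ ↦ ⟨(n : ℝ)⁻¹ • (w : E), ?_⟩
    simp [f, smul_smul, hn, orthogonalProjectionOnto_mem_subspace_eq_self]
  have hfM : f '' M ⊆ ZLattice.comap ℝ M W.subtype := by
    rintro _ ⟨x, hx, rfl⟩
    exact hW x hx
  refine eq_top_iff.2 ?_
  calc ⊤ = span ℝ (f '' M) := by rw [← map_span, IsZLattice.span_top, Submodule.map_top, hf]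
    _ ≤ span ℝ (ZLattice.comap ℝ M W.subtype : Set W) := span_mono hfM

theorem exists_linearIndependent_inter (W : Submodule ℝ E)
    (hW : span ℝ (ZLattice.comap ℝ M W.subtype : Set W) = ⊤) {d : ℕ} (hd : finrank ℝ W = d) :
    ∃ v : Fin d → E, LinearIndependent ℝ v ∧ span ℝ (Set.range v) = W ∧
      ∀ x, x ∈ M ∧ x ∈ W ↔ x ∈ span ℤ (Set.range v) := by
  set N := ZLattice.comap ℝ M W.subtype
  have : DiscreteTopology N :=
    comap_discreteTopology ℝ M continuous_subtype_val W.injective_subtype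
  have : IsZLattice ℝ N := ⟨hW⟩
  let c : Basis (Fin d) ℤ N := finBasisOfFinrankEq ℤ N ((ZLattice.rank ℝ N).trans hd)
  let cR : Basis (Fin d) ℝ W := c.ofZLatticeBasis ℝ N
  refine ⟨W.subtype ∘ cR, cR.linearIndependent.map' _ W.ker_subtype, ?_, fun x ↦ ?_⟩
  · rw [Set.range_comp, ← map_span, cR.span_eq, Submodule.map_top, range_subtype]
  · have : span ℤ (Set.range (W.subtype ∘ cR)) = N.map (W.subtype.restrictScalars ℤ) := by
      rw [← c.ofZLatticeBasis_span ℝ N, map_span, ← Set.range_comp]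
      rfl
    rw [this, mem_map]
    constructor
    · rintro ⟨hxM, hxW⟩
      exact ⟨⟨x, hxW⟩, hxM, rfl⟩
    · rintro ⟨w, hwN, rfl⟩
      exact ⟨hwN, w.2⟩

end ZLattice

theorem isFullLattice_iff (L : AddSubgroup E3) :
    IsFullLattice L ↔ ∃ b : Basis (Fin 3) ℝ E3, L = (span ℤ (Set.range b)).toAddSubgroup := by
  refine exists_congr fun b ↦ ?_
  simp_rw [AddSubgroup.ext_iff, mem_toAddSubgroup, mem_span_range_iff_exists_fun,
    Int.cast_smul_eq_zsmul, eq_comm (a := ∑ i, _)]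

/-- Let `S` be a linear isometry of `ℝ³` of order `3` whose fixed-point set
is a line `ℓ` through the origin, let `Π = ℓ^⊥`, and let `L` be a full-rank lattice preserved
by `S`.  Then (i) `L ∩ ℓ = ℤ y` for some nonzero `y ∈ ℓ`; (ii) `L ∩ Π` is a rank-2 lattice
spanning `Π`; (iii) for every `x ∈ L` the orthogonal projection of `3x` onto `Π` lies in
`L ∩ Π`. -/
theorem statement13 (S : E3 ≃ₗᵢ[ℝ] E3) (hord : orderOf S = 3)
    (ℓ : Submodule ℝ E3) (hℓ : Module.finrank ℝ ℓ = 1)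
    (hfix : ∀ x : E3, S x = x ↔ x ∈ ℓ)
    (L : AddSubgroup E3) (hL : IsFullLattice L)
    (hpres : S '' (L : Set E3) = (L : Set E3)) :
    (∃ y : E3, y ≠ 0 ∧ y ∈ ℓ ∧
      (∀ x : E3, (x ∈ L ∧ x ∈ ℓ) ↔ ∃ k : ℤ, x = k • y)) ∧
    (∃ w₁ w₂ : E3, w₁ ∈ ℓᗮ ∧ w₂ ∈ ℓᗮ ∧ LinearIndependent ℝ ![w₁, w₂] ∧
      Submodule.span ℝ {w₁, w₂} = ℓᗮ ∧
      (∀ x : E3, (x ∈ L ∧ x ∈ ℓᗮ) ↔ ∃ m n : ℤ, x = m • w₁ + n • w₂)) ∧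
    (∀ x ∈ L, (Submodule.orthogonalProjectionOnto ℓᗮ ((3 : ℝ) • x) : E3) ∈ L) := by
  obtain ⟨b, rfl⟩ := (isFullLattice_iff L).1 hL
  set M := span ℤ (Set.range b)
  have hS : S ^ 3 = 1 := by
    have := pow_orderOf_eq_one S
    rwa [hord] at this
  have hSM (x : E3) (hx : x ∈ M) : S x ∈ M := hpres.subset ⟨x, hx, rfl⟩
  have hM_ℓ (x : E3) (hx : x ∈ M) : ((3 : ℕ) : ℝ) • ℓ.starProjection x ∈ M :=
    S.smul_starProjection_mem hS hfix (L := M.toAddSubgroup) hSM hx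
  have hM_ℓperp (x : E3) (hx : x ∈ M) : ((3 : ℕ) : ℝ) • ℓᗮ.starProjection x ∈ M :=
    S.smul_starProjection_orthogonal_mem hS hfix (L := M.toAddSubgroup) hSM hx
  have hℓperp : finrank ℝ ℓᗮ = 2 := by
    have := ℓ.finrank_add_finrank_orthogonal
    rw [finrank_euclideanSpace_fin] at this
    omega
  obtain ⟨y, hy_li, hy_span, hy_mem⟩ := ZLattice.exists_linearIndependent_inter M ℓ
    (ZLattice.span_comap_subtype_eq_top M three_ne_zero hM_ℓ) hℓ
  obtain ⟨w, hw_li, hw_span, hw_mem⟩ := ZLattice.exists_linearIndependent_inter M ℓᗮ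
    (ZLattice.span_comap_subtype_eq_top M three_ne_zero hM_ℓperp) hℓperp
  rw [Set.range_unique] at hy_span hy_mem
  have hw : w = ![w 0, w 1] := List.ofFn_inj.mp rfl
  rw [hw, Matrix.range_cons_cons_empty] at hw_span hw_mem
  rw [hw] at hw_li
  refine ⟨⟨y 0, hy_li.ne_zero 0, hy_span ▸ mem_span_singleton_self _, fun x ↦ ?_⟩,
    ⟨w 0, w 1, hw_span ▸ subset_span (by simp), hw_span ▸ subset_span (by simp), hw_li, hw_span,
      fun x ↦ ?_⟩, fun x hx ↦ ?_⟩
  · simp [hy_mem, mem_span_singleton, eq_comm]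
  · simp [hw_mem, mem_span_pair, eq_comm]
  · simpa [← starProjection_apply] using hM_ℓperp x hx

end
end
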